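/- Let (M,I,J,K,g_M) be a hyperkähler manifold, (N,g_N) a Riemannian manifold with dim N = 2, and F : (M,I,J,K,g_M) → (N,g_N) an almost h-conformal slant submersion with (I,J,K) an almost h-conformal slant basis. Assume ω_R is parallel with slant angle 0 ≤ θ_R < π/2 for some R ∈ {I,J,K}. Then F is a harmonic map. -/

import Mathlib

open scoped BigOperators

/-- Abstract framework for a horizontally conformal submersion `F : (M, g_M) → (N, g_N)`
between Riemannian manifolds.  `M` is the set of points of the total manifold,
`VFM` plays the role of the space of smooth vector fields on `M`
(a module over the ring of functions `M → ℝ`), and `VFN` plays the role of the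
space of sections of the pullback bundle `F*(TN)` (vector fields along `F`).
`gM`, `gN` are the (pulled back) Riemannian metrics, `nabla` is the Levi-Civita
connection of `gM`, `Vp`/`Hp` are the vertical/horizontal projections onto
`ker F_*` and `(ker F_*)^⊥`, `Fstar` is the differential `F_*`, `nablaF` is
the pullback connection `∇^F`, `lam` is the dilation `λ`, and `dimN = dim N`. -/
structure HorizConfSubmersion (M : Type) (VFM : Type) (VFN : Type)
    [AddCommGroup VFM] [Module (M → ℝ) VFM]
    [AddCommGroup VFN] [Module (M → ℝ) VFN] : Type where
  gM : VFM → VFM → M → ℝ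
  gN : VFN → VFN → M → ℝ
  nabla : VFM → VFM → VFM
  bracket : VFM → VFM → VFM
  act : VFM → (M → ℝ) → M → ℝ
  grad : (M → ℝ) → VFM
  Vp : VFM → VFM
  Hp : VFM → VFM
  Fstar : VFM → VFN
  nablaF : VFM → VFN → VFN
  lam : M → ℝ
  dimN : ℕ
  lam_pos : ∀ p, 0 < lam p
  gM_symm : ∀ X Y, gM X Y = gM Y X
  gM_add_left : ∀ X Y Z, gM (X + Y) Z = gM X Z + gM Y Z
  gM_smul_left : ∀ (f : M → ℝ) (X Y : VFM), gM (f • X) Y = f * gM X Y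
  gN_symm : ∀ s t, gN s t = gN t s
  gN_add_left : ∀ s t u, gN (s + t) u = gN s u + gN t u
  gN_smul_left : ∀ (f : M → ℝ) (s t : VFN), gN (f • s) t = f * gN s t
  Vp_add : ∀ E E', Vp (E + E') = Vp E + Vp E'
  Hp_add : ∀ E E', Hp (E + E') = Hp E + Hp E'
  Vp_smul : ∀ (f : M → ℝ) (E : VFM), Vp (f • E) = f • Vp E
  Hp_smul : ∀ (f : M → ℝ) (E : VFM), Hp (f • E) = f • Hp E
  Vp_add_Hp : ∀ E, Vp E + Hp E = E
  Vp_Vp : ∀ E, Vp (Vp E) = Vp E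
  Hp_Hp : ∀ E, Hp (Hp E) = Hp E
  Vp_Hp : ∀ E, Vp (Hp E) = 0
  Hp_Vp : ∀ E, Hp (Vp E) = 0
  gM_VH : ∀ E E', gM (Vp E) (Hp E') = 0
  nabla_add_left : ∀ X Y Z, nabla (X + Y) Z = nabla X Z + nabla Y Z
  nabla_add_right : ∀ X Y Z, nabla X (Y + Z) = nabla X Y + nabla X Z
  nabla_smul_left : ∀ (f : M → ℝ) (X Y : VFM), nabla (f • X) Y = f • nabla X Y
  nabla_leibniz : ∀ (f : M → ℝ) (X Y : VFM),
    nabla X (f • Y) = act X f • Y + f • nabla X Y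
  nabla_torsion_free : ∀ X Y, nabla X Y - nabla Y X = bracket X Y
  nabla_metric : ∀ X Y Z, act X (gM Y Z) = gM (nabla X Y) Z + gM Y (nabla X Z)
  grad_spec : ∀ (f : M → ℝ) (X : VFM), gM (grad f) X = act X f
  Fstar_add : ∀ E E', Fstar (E + E') = Fstar E + Fstar E'
  Fstar_smul : ∀ (f : M → ℝ) (E : VFM), Fstar (f • E) = f • Fstar E
  Fstar_vert : ∀ E, Fstar (Vp E) = 0
  /-- `F` is a submersion: every vector field along `F` comes from a horizontal field. -/
  Fstar_surj : ∀ s, ∃ X, Vp X = 0 ∧ Fstar X = s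
  /-- horizontal conformality: `g_N(F_* X, F_* Y) = λ² g_M(X, Y)` on horizontal fields. -/
  conformal : ∀ X Y, Vp X = 0 → Vp Y = 0 →
    gN (Fstar X) (Fstar Y) = fun p => lam p ^ 2 * gM X Y p
  nablaF_add : ∀ X s t, nablaF X (s + t) = nablaF X s + nablaF X t
  nablaF_add_left : ∀ X Y s, nablaF (X + Y) s = nablaF X s + nablaF Y s
  nablaF_smul_left : ∀ (f : M → ℝ) (X : VFM) (s : VFN),
    nablaF (f • X) s = f • nablaF X s
  nablaF_leibniz : ∀ (f : M → ℝ) (X : VFM) (s : VFN),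
    nablaF X (f • s) = act X f • s + f • nablaF X s
  nablaF_metric : ∀ X s t, act X (gN s t) = gN (nablaF X s) t + gN s (nablaF X t)
  /-- symmetry of the second fundamental form `(∇F_*)(X,Y)`. -/
  sff_symm : ∀ X Y, nablaF X (Fstar Y) - Fstar (nabla X Y)
    = nablaF Y (Fstar X) - Fstar (nabla Y X)
  /-- the fundamental formula for `(∇F_*)` of a horizontally conformal submersion
  on horizontal vector fields. -/
  sff_horizontal : ∀ X Y, Vp X = 0 → Vp Y = 0 →
    nablaF X (Fstar Y) - Fstar (nabla X Y)
      = act X (fun p => Real.log (lam p)) • Fstar Y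
        + act Y (fun p => Real.log (lam p)) • Fstar X
        - gM X Y • Fstar (grad fun p => Real.log (lam p))
  /-- `N` is `dimN`-dimensional: there is a global orthonormal frame of sections
  along `F` (an abstract simplification). -/
  frameN : ∃ e : Fin dimN → VFN,
    (∀ i j, gN (e i) (e j) = fun _ => if i = j then (1 : ℝ) else 0) ∧
    ∀ s, s = ∑ i, gN s (e i) • e i

namespace HorizConfSubmersion

variable {M VFM VFN : Type} [AddCommGroup VFM] [Module (M → ℝ) VFM]
    [AddCommGroup VFN] [Module (M → ℝ) VFN]
variable (D : HorizConfSubmersion M VFM VFN)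

/-- the O'Neill tensor `T`. -/
def T (E F : VFM) : VFM :=
  D.Hp (D.nabla (D.Vp E) (D.Vp F)) + D.Vp (D.nabla (D.Vp E) (D.Hp F))

/-- the O'Neill tensor `A`. -/
def A (E F : VFM) : VFM :=
  D.Hp (D.nabla (D.Hp E) (D.Vp F)) + D.Vp (D.nabla (D.Hp E) (D.Hp F))

/-- `V̂∇_V W = V∇_V W`. -/
def hatNabla (V W : VFM) : VFM := D.Vp (D.nabla V W)

/-- vertical part of `R E`; this is `φ_R` on vertical fields and `B_R` on
horizontal fields. -/
def phi (R : VFM → VFM) (E : VFM) : VFM := D.Vp (R E)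

/-- horizontal part of `R E`; this is `ω_R` on vertical fields and `C_R` on
horizontal fields. -/
def om (R : VFM → VFM) (E : VFM) : VFM := D.Hp (R E)

/-- `ln λ`. -/
noncomputable def lnlam : M → ℝ := fun p => Real.log (D.lam p)

/-- the second fundamental form `(∇F_*)(X,Y) = ∇^F_X F_* Y − F_*(∇_X Y)`. -/
def sff (X Y : VFM) : VFN := D.nablaF X (D.Fstar Y) - D.Fstar (D.nabla X Y)

/-- `F` is horizontally homothetic: `X(λ) = 0` for every horizontal `X`. -/
def HorizHomothetic : Prop := ∀ X, D.Vp X = 0 → D.act X D.lam = 0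

/-- the horizontal distribution `(ker F_*)^⊥` is integrable. -/
def HIntegrable : Prop :=
  ∀ X Y, D.Vp X = 0 → D.Vp Y = 0 → D.Vp (D.bracket X Y) = 0

/-- the horizontal distribution `(ker F_*)^⊥` defines a totally geodesic foliation. -/
def HTotallyGeodesic : Prop :=
  ∀ X Y, D.Vp X = 0 → D.Vp Y = 0 → D.Vp (D.nabla X Y) = 0

/-- the vertical distribution `ker F_*` defines a totally geodesic foliation. -/
def VTotallyGeodesic : Prop :=
  ∀ V W, D.Hp V = 0 → D.Hp W = 0 → D.Hp (D.nabla V W) = 0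

/-- `e` is a (local) orthonormal frame of the vertical distribution `ker F_*`. -/
def IsVertFrame {m : ℕ} (e : Fin m → VFM) : Prop :=
  (∀ i, D.Hp (e i) = 0) ∧
  (∀ i j, D.gM (e i) (e j) = fun _ => if i = j then (1 : ℝ) else 0) ∧
  (∀ V, D.Hp V = 0 → V = ∑ i, D.gM V (e i) • e i)

/-- `e` is a (local) orthonormal frame of `TM`. -/
def IsFrame {m : ℕ} (e : Fin m → VFM) : Prop :=
  (∀ i j, D.gM (e i) (e j) = fun _ => if i = j then (1 : ℝ) else 0) ∧
  (∀ E, E = ∑ i, D.gM E (e i) • e i)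

/-- `F` is a harmonic map: the tension field `τ(F) = trace (∇F_*)` vanishes. -/
def Harmonic : Prop :=
  ∀ (m : ℕ) (e : Fin m → VFM), D.IsFrame e → ∑ i, D.sff (e i) (e i) = 0

/-- `F` is a totally geodesic map: `(∇F_*) ≡ 0`. -/
def TotallyGeodesicMap : Prop := ∀ X Y, D.sff X Y = 0

/-- `X ∈ Γ(μ^R)`, the orthogonal complement of `ω_R(ker F_*)` inside `(ker F_*)^⊥`. -/
def InMu (R : VFM → VFM) (X : VFM) : Prop :=
  D.Vp X = 0 ∧ ∀ V, D.Hp V = 0 → D.gM X (D.om R V) = 0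

/-- `R` is an almost Hermitian structure on `(M, g_M)`:
`R` is `C^∞(M)`-linear, `R² = −id` and `R` is an isometry of `g_M`. -/
def IsHermitian (R : VFM → VFM) : Prop :=
  (∀ X Y, R (X + Y) = R X + R Y) ∧
  (∀ (f : M → ℝ) (X : VFM), R (f • X) = f • R X) ∧
  (∀ X, R (R X) = -X) ∧
  (∀ X Y, D.gM (R X) (R Y) = D.gM X Y)

/-- `R` is parallel with respect to the Levi-Civita connection: `∇R = 0`. -/
def IsParallel (R : VFM → VFM) : Prop :=
  ∀ X Y, D.nabla X (R Y) = R (D.nabla X Y)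

/-- the angle between `R X` and the vertical space is the constant `θ` for every
nonzero vertical `X` at every point: `‖vertical part of R X‖ = cos θ · ‖X‖`
pointwise (recall `‖R X‖ = ‖X‖`). -/
def IsSlantOp (R : VFM → VFM) (θ : ℝ) : Prop :=
  0 ≤ θ ∧ θ ≤ Real.pi / 2 ∧
  ∀ V, D.Hp V = 0 → ∀ p,
    Real.sqrt (D.gM (D.phi R V) (D.phi R V) p) = Real.cos θ * Real.sqrt (D.gM V V p)

/-- `ω_R` is parallel: `(∇_V ω_R)(W) = H∇_V ω_R W − ω_R V̂∇_V W = 0` for all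
vertical `V`, `W`. -/
def OmParallel (R : VFM → VFM) : Prop :=
  ∀ V W, D.Hp V = 0 → D.Hp W = 0 →
    D.Hp (D.nabla V (D.om R W)) = D.om R (D.Vp (D.nabla V W))

end HorizConfSubmersion

/-- a quaternionic Hermitian basis `(I, J, K)` for `(M, g_M)` (as in an almost
quaternionic Hermitian manifold):  `I² = J² = K² = −id`, `IJ = −JI = K`, and
`I, J, K` are isometries of `g_M`. -/
structure QuatHermTriple {M VFM VFN : Type} [AddCommGroup VFM] [Module (M → ℝ) VFM]
    [AddCommGroup VFN] [Module (M → ℝ) VFN]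
    (D : HorizConfSubmersion M VFM VFN) : Type where
  I : VFM → VFM
  J : VFM → VFM
  K : VFM → VFM
  hermitian_I : D.IsHermitian I
  hermitian_J : D.IsHermitian J
  hermitian_K : D.IsHermitian K
  mul_IJ : ∀ X, I (J X) = K X
  mul_JI : ∀ X, J (I X) = -(K X)

/-- a hyperkähler structure `(I, J, K, g_M)` on `M`: a quaternionic Hermitian
basis which is parallel with respect to the Levi-Civita connection of `g_M`. -/
structure HyperkahlerTriple {M VFM VFN : Type} [AddCommGroup VFM] [Module (M → ℝ) VFM]
    [AddCommGroup VFN] [Module (M → ℝ) VFN]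
    (D : HorizConfSubmersion M VFM VFN) extends QuatHermTriple D : Type where
  parallel_I : D.IsParallel I
  parallel_J : D.IsParallel J
  parallel_K : D.IsParallel K

/-!
For a horizontal field `X`, the fundamental formula for `∇F_*` on horizontal fields gives
`g_N(τ(F), F_* X) = λ² ((2 - dim N) X(ln λ) - ∑ᵢ g(∇_{V eᵢ} V eᵢ, X))`, so when `dim N = 2`
harmonicity reduces to minimality of the fibres.

The fibres are minimal by the slant condition. Since `R` and `ω_R` are parallel,
`H∇_V (φ_R W) = C_R (H∇_V W)` for vertical `V, W`; applied twice and combined with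
`φ_R² = -cos² θ` and `C_R² = -1 - ω_R B_R`, this yields
`g(∇_{φ_R V} φ_R W, X) = -cos² θ · g(∇_V W, X)`. Tracing this identity and moving the skew
operator `φ_R` across the trace yields the same trace multiplied by `+cos² θ`, so it
vanishes because `cos θ ≠ 0`.
-/

namespace HorizConfSubmersion

variable {M VFM VFN : Type} [AddCommGroup VFM] [Module (M → ℝ) VFM]
    [AddCommGroup VFN] [Module (M → ℝ) VFN]
variable (D : HorizConfSubmersion M VFM VFN)

lemma gM_add_right (X Y Z : VFM) : D.gM X (Y + Z) = D.gM X Y + D.gM X Z := by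
  rw [D.gM_symm, D.gM_add_left, D.gM_symm Y, D.gM_symm Z]

lemma gM_smul_right (f : M → ℝ) (X Y : VFM) : D.gM X (f • Y) = f * D.gM X Y := by
  rw [D.gM_symm, D.gM_smul_left, D.gM_symm]

lemma gM_zero_left (X : VFM) : D.gM 0 X = 0 :=
  map_zero (AddMonoidHom.mk' (D.gM · X) (D.gM_add_left · · X))

lemma gM_sub_left (X Y Z : VFM) : D.gM (X - Y) Z = D.gM X Z - D.gM Y Z :=
  map_sub (AddMonoidHom.mk' (D.gM · Z) (D.gM_add_left · · Z)) X Y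

lemma gM_zero_right (X : VFM) : D.gM X 0 = 0 :=
  map_zero (AddMonoidHom.mk' (D.gM X) (D.gM_add_right X))

lemma gM_neg_right (X Y : VFM) : D.gM X (-Y) = -D.gM X Y :=
  map_neg (AddMonoidHom.mk' (D.gM X) (D.gM_add_right X)) Y

lemma gM_sub_right (X Y Z : VFM) : D.gM X (Y - Z) = D.gM X Y - D.gM X Z :=
  map_sub (AddMonoidHom.mk' (D.gM X) (D.gM_add_right X)) Y Z

lemma gM_sum_left {ι : Type} (s : Finset ι) (F : ι → VFM) (Z : VFM) :
    D.gM (∑ i ∈ s, F i) Z = ∑ i ∈ s, D.gM (F i) Z :=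
  map_sum (AddMonoidHom.mk' (D.gM · Z) (D.gM_add_left · · Z)) F s

lemma gN_add_right (s t u : VFN) : D.gN s (t + u) = D.gN s t + D.gN s u := by
  rw [D.gN_symm, D.gN_add_left, D.gN_symm t, D.gN_symm u]

lemma gN_smul_right (f : M → ℝ) (s t : VFN) : D.gN s (f • t) = f * D.gN s t := by
  rw [D.gN_symm, D.gN_smul_left, D.gN_symm]

lemma gN_neg_left (s t : VFN) : D.gN (-s) t = -D.gN s t :=
  map_neg (AddMonoidHom.mk' (D.gN · t) (D.gN_add_left · · t)) s

lemma gN_sub_left (s s' t : VFN) : D.gN (s - s') t = D.gN s t - D.gN s' t :=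
  map_sub (AddMonoidHom.mk' (D.gN · t) (D.gN_add_left · · t)) s s'

lemma gN_sum_left {ι : Type} (s : Finset ι) (F : ι → VFN) (t : VFN) :
    D.gN (∑ i ∈ s, F i) t = ∑ i ∈ s, D.gN (F i) t :=
  map_sum (AddMonoidHom.mk' (D.gN · t) (D.gN_add_left · · t)) F s

lemma gN_sum_right {ι : Type} (s : Finset ι) (t : VFN) (F : ι → VFN) :
    D.gN t (∑ i ∈ s, F i) = ∑ i ∈ s, D.gN t (F i) :=
  map_sum (AddMonoidHom.mk' (D.gN t) (D.gN_add_right t)) F s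

lemma Vp_neg (E : VFM) : D.Vp (-E) = -D.Vp E :=
  map_neg (AddMonoidHom.mk' D.Vp D.Vp_add) E

lemma Hp_neg (E : VFM) : D.Hp (-E) = -D.Hp E :=
  map_neg (AddMonoidHom.mk' D.Hp D.Hp_add) E

lemma nabla_neg_right (X Y : VFM) : D.nabla X (-Y) = -D.nabla X Y :=
  map_neg (AddMonoidHom.mk' (D.nabla X) (D.nabla_add_right X)) Y

lemma nablaF_zero_right (X : VFM) : D.nablaF X 0 = 0 :=
  map_zero (AddMonoidHom.mk' (D.nablaF X) (D.nablaF_add X))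

lemma Vp_eq_self {V : VFM} (hV : D.Hp V = 0) : D.Vp V = V := by
  simpa [hV] using D.Vp_add_Hp V

lemma Hp_eq_self {X : VFM} (hX : D.Vp X = 0) : D.Hp X = X := by
  simpa [hX] using D.Vp_add_Hp X

lemma Fstar_eq_zero {V : VFM} (hV : D.Hp V = 0) : D.Fstar V = 0 := by
  rw [← D.Vp_eq_self hV, D.Fstar_vert]

lemma Fstar_Hp (E : VFM) : D.Fstar (D.Hp E) = D.Fstar E := by
  conv_rhs => rw [← D.Vp_add_Hp E]
  rw [D.Fstar_add, D.Fstar_vert, zero_add]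

lemma gM_Vp_comm (A B : VFM) : D.gM (D.Vp A) B = D.gM A (D.Vp B) := by
  conv_lhs => rw [← D.Vp_add_Hp B]
  conv_rhs => rw [← D.Vp_add_Hp A]
  rw [D.gM_add_right, D.gM_add_left, D.gM_VH, D.gM_symm (D.Hp A), D.gM_VH]

lemma gM_Hp_comm (A B : VFM) : D.gM (D.Hp A) B = D.gM A (D.Hp B) := by
  conv_lhs => rw [← D.Vp_add_Hp B]
  conv_rhs => rw [← D.Vp_add_Hp A]
  rw [D.gM_add_right, D.gM_add_left, D.gM_VH, D.gM_symm (D.Hp A), D.gM_VH]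

lemma gM_Vp_of_horizontal {X : VFM} (hX : D.Vp X = 0) (E : VFM) : D.gM (D.Vp E) X = 0 := by
  rw [D.gM_Vp_comm, hX, D.gM_zero_right]

lemma gM_Vp_of_vertical {V : VFM} (hV : D.Hp V = 0) (E : VFM) :
    D.gM (D.Vp E) V = D.gM E V := by
  rw [D.gM_Vp_comm, D.Vp_eq_self hV]

lemma gM_Hp_of_horizontal {X : VFM} (hX : D.Vp X = 0) (E : VFM) :
    D.gM (D.Hp E) X = D.gM E X := by
  rw [D.gM_Hp_comm, D.Hp_eq_self hX]

lemma act_zero (X : VFM) : D.act X 0 = 0 := by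
  simpa [D.gM_zero_left, D.gM_zero_right] using D.nabla_metric X 0 0

lemma gN_Fstar_Fstar {X : VFM} (hX : D.Vp X = 0) (E : VFM) :
    D.gN (D.Fstar E) (D.Fstar X) = D.lam ^ 2 * D.gM E X := by
  rw [← D.Fstar_Hp E, D.conformal _ _ (D.Vp_Hp E) hX, D.gM_Hp_of_horizontal hX]
  rfl

lemma eq_of_lam_sq_mul_eq {f g : M → ℝ} (h : D.lam ^ 2 * f = D.lam ^ 2 * g) : f = g :=
  funext fun p => mul_left_cancel₀ (pow_ne_zero 2 (D.lam_pos p).ne') (congrFun h p)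

lemma gM_eq_of_Fstar_eq {E E' X : VFM} (hX : D.Vp X = 0) (h : D.Fstar E = D.Fstar E') :
    D.gM E X = D.gM E' X :=
  D.eq_of_lam_sq_mul_eq <| by rw [← D.gN_Fstar_Fstar hX, ← D.gN_Fstar_Fstar hX, h]

lemma Fstar_nabla_comm_of_vertical {A B : VFM} (hA : D.Hp A = 0) (hB : D.Hp B = 0) :
    D.Fstar (D.nabla A B) = D.Fstar (D.nabla B A) := by
  have h := D.sff_symm A B
  rwa [D.Fstar_eq_zero hA, D.Fstar_eq_zero hB, D.nablaF_zero_right, D.nablaF_zero_right,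
    zero_sub, zero_sub, neg_inj] at h

lemma gM_nabla_comm_of_vertical {A B X : VFM} (hA : D.Hp A = 0) (hB : D.Hp B = 0)
    (hX : D.Vp X = 0) : D.gM (D.nabla A B) X = D.gM (D.nabla B A) X :=
  D.gM_eq_of_Fstar_eq hX (D.Fstar_nabla_comm_of_vertical hA hB)

lemma eq_zero_of_forall_gN_Fstar (s : VFN) (h : ∀ X, D.Vp X = 0 → D.gN s (D.Fstar X) = 0) :
    s = 0 := by
  obtain ⟨f, -, hexp⟩ := D.frameN
  rw [hexp s]
  refine Finset.sum_eq_zero fun j _ => ?_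
  obtain ⟨X, hX, hXf⟩ := D.Fstar_surj (f j)
  rw [← hXf, h X hX, zero_smul]

section Frame

variable {D} {m : ℕ} {e : Fin m → VFM}

lemma gM_eq_sum_mul (he : D.IsFrame e) (A B : VFM) :
    D.gM A B = ∑ i, D.gM A (e i) * D.gM (e i) B := by
  conv_lhs => rw [he.2 A]
  rw [D.gM_sum_left]
  exact Finset.sum_congr rfl fun i _ => D.gM_smul_left _ _ _

lemma gM_self_nonneg (he : D.IsFrame e) (A : VFM) (p : M) : 0 ≤ D.gM A A p := by
  rw [gM_eq_sum_mul he, Finset.sum_apply]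
  refine Finset.sum_nonneg fun i _ => ?_
  rw [Pi.mul_apply, D.gM_symm (e i)]
  exact mul_self_nonneg _

lemma eq_zero_of_forall_gM (he : D.IsFrame e) (U : VFM) (h : ∀ B, D.gM U B = 0) : U = 0 := by
  rw [he.2 U]
  exact Finset.sum_eq_zero fun i _ => by rw [h, zero_smul]

lemma sum_apply_eq_sum_adjoint_apply (he : D.IsFrame e) (S : VFM → VFM → M → ℝ)
    (hS_add_left : ∀ A A' B, S (A + A') B = S A B + S A' B)
    (hS_smul_left : ∀ (f : M → ℝ) A B, S (f • A) B = f * S A B)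
    (hS_add_right : ∀ A B B', S A (B + B') = S A B + S A B')
    (hS_smul_right : ∀ (f : M → ℝ) A B, S A (f • B) = f * S A B)
    (Q Q' : VFM → VFM) (hQ : ∀ A B, D.gM (Q A) B = D.gM A (Q' B)) :
    ∑ i, S (e i) (Q (e i)) = ∑ j, S (Q' (e j)) (e j) := by
  have expand_right : ∀ i, S (e i) (Q (e i)) = ∑ j, D.gM (Q (e i)) (e j) * S (e i) (e j) := by
    intro i
    calc S (e i) (Q (e i)) = S (e i) (∑ j, D.gM (Q (e i)) (e j) • e j) := congrArg _ (he.2 _)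
      _ = ∑ j, S (e i) (D.gM (Q (e i)) (e j) • e j) :=
        map_sum (AddMonoidHom.mk' (S (e i)) (hS_add_right (e i))) _ _
      _ = _ := Finset.sum_congr rfl fun j _ => hS_smul_right _ _ _
  have expand_left : ∀ j, S (Q' (e j)) (e j) = ∑ i, D.gM (e i) (Q' (e j)) * S (e i) (e j) := by
    intro j
    calc S (Q' (e j)) (e j) = S (∑ i, D.gM (Q' (e j)) (e i) • e i) (e j) :=
          congrArg (S · (e j)) (he.2 _)
      _ = ∑ i, S (D.gM (Q' (e j)) (e i) • e i) (e j) :=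
        map_sum (AddMonoidHom.mk' (S · (e j)) (hS_add_left · · (e j))) _ _
      _ = _ := Finset.sum_congr rfl fun i _ => by rw [hS_smul_left, D.gM_symm]
  simp only [expand_right, expand_left, hQ]
  exact Finset.sum_comm

lemma sum_gN_Fstar_mul_gN_Fstar (he : D.IsFrame e) (s t : VFN) :
    ∑ i, D.gN (D.Fstar (e i)) s * D.gN (D.Fstar (e i)) t = D.lam ^ 2 * D.gN s t := by
  obtain ⟨X, hX, rfl⟩ := D.Fstar_surj s
  obtain ⟨Y, hY, rfl⟩ := D.Fstar_surj t
  simp only [D.gN_Fstar_Fstar hX, D.gN_Fstar_Fstar hY, gM_eq_sum_mul he X Y, Finset.mul_sum]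
  refine Finset.sum_congr rfl fun i _ => ?_
  rw [D.gM_symm (e i) X]
  ring

lemma sum_gN_Fstar_self (he : D.IsFrame e) :
    ∑ i, D.gN (D.Fstar (e i)) (D.Fstar (e i)) = D.lam ^ 2 * D.dimN := by
  obtain ⟨f, horth, hexp⟩ := D.frameN
  have parseval : ∀ s, D.gN s s = ∑ j, D.gN s (f j) * D.gN s (f j) := fun s =>
    calc D.gN s s = D.gN s (∑ j, D.gN s (f j) • f j) := congrArg _ (hexp s)
      _ = _ := by simp only [D.gN_sum_right, D.gN_smul_right]
  simp only [parseval (D.Fstar _)]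
  rw [Finset.sum_comm]
  simp only [sum_gN_Fstar_mul_gN_Fstar he, horth, if_true, Finset.sum_const, Finset.card_univ,
    Fintype.card_fin, nsmul_eq_mul]
  change _ * (_ * 1) = _
  ring

lemma sum_gM_Hp_self (he : D.IsFrame e) :
    ∑ i, D.gM (D.Hp (e i)) (D.Hp (e i)) = D.dimN := by
  refine D.eq_of_lam_sq_mul_eq ?_
  rw [← sum_gN_Fstar_self he, Finset.mul_sum]
  refine Finset.sum_congr rfl fun i _ => ?_
  rw [← D.gN_Fstar_Fstar (D.Vp_Hp _), D.Fstar_Hp]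

lemma sum_gM_mul_gM_Hp (he : D.IsFrame e) {X : VFM} (hX : D.Vp X = 0) (A : VFM) :
    ∑ i, D.gM A (D.Hp (e i)) * D.gM (D.Hp (e i)) X = D.gM A X := by
  rw [← D.gM_Hp_of_horizontal hX A, gM_eq_sum_mul he]
  exact Finset.sum_congr rfl fun i _ => by
    rw [D.gM_Hp_comm A, D.gM_Hp_of_horizontal hX]

lemma sum_gM_nabla_Hp_Vp (he : D.IsFrame e) {X : VFM} (hX : D.Vp X = 0) :
    ∑ i, D.gM (D.nabla (D.Hp (e i)) (D.Vp (e i))) X = 0 := by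
  have compat : ∀ i, D.gM (D.nabla (D.Hp (e i)) (D.Vp (e i))) X
      = -D.gM (D.Vp (e i)) (D.nabla (D.Hp (e i)) X) := fun i => by
    have h := D.nabla_metric (D.Hp (e i)) (D.Vp (e i)) X
    rw [D.gM_Vp_of_horizontal hX, D.act_zero] at h
    exact eq_neg_of_add_eq_zero_left h.symm
  have transfer := sum_apply_eq_sum_adjoint_apply he (fun A B => D.gM (D.Vp A) (D.nabla B X))
    (fun A A' B => by simp only [D.Vp_add, D.gM_add_left])
    (fun f A B => by simp only [D.Vp_smul, D.gM_smul_left])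
    (fun A B B' => by simp only [D.nabla_add_left, D.gM_add_right])
    (fun f A B => by simp only [D.nabla_smul_left, D.gM_smul_right])
    D.Hp D.Hp D.gM_Hp_comm
  simp only [D.Vp_Hp, D.gM_symm 0, D.gM_zero_right, Finset.sum_const_zero] at transfer
  rw [Finset.sum_congr rfl fun i _ => compat i, Finset.sum_neg_distrib, transfer, neg_zero]

end Frame

lemma sff_add_left (A B C : VFM) : D.sff (A + B) C = D.sff A C + D.sff B C := by
  simp only [sff, D.nablaF_add_left, D.nabla_add_left, D.Fstar_add]
  abel

lemma sff_add_right (A B C : VFM) : D.sff A (B + C) = D.sff A B + D.sff A C := by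
  simp only [sff, D.nablaF_add, D.nabla_add_right, D.Fstar_add]
  abel

lemma sff_comm (A B : VFM) : D.sff A B = D.sff B A := D.sff_symm A B

lemma sff_self (E : VFM) : D.sff E E = D.sff (D.Vp E) (D.Vp E) + D.sff (D.Hp E) (D.Vp E)
    + D.sff (D.Hp E) (D.Vp E) + D.sff (D.Hp E) (D.Hp E) := by
  conv_lhs => rw [← D.Vp_add_Hp E]
  rw [D.sff_add_left, D.sff_add_right, D.sff_add_right, D.sff_comm (D.Vp E) (D.Hp E)]
  abel

lemma gN_sff_Fstar_of_vertical {W X : VFM} (hW : D.Hp W = 0) (hX : D.Vp X = 0) (A : VFM) :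
    D.gN (D.sff A W) (D.Fstar X) = -(D.lam ^ 2 * D.gM (D.nabla A W) X) := by
  rw [sff, D.Fstar_eq_zero hW, D.nablaF_zero_right, zero_sub, D.gN_neg_left,
    D.gN_Fstar_Fstar hX]

lemma gN_sff_Fstar_of_horizontal {X Y : VFM} (hX : D.Vp X = 0) (hY : D.Vp Y = 0) :
    D.gN (D.sff Y Y) (D.Fstar X)
      = D.lam ^ 2 * (2 * D.act Y D.lnlam * D.gM Y X - D.gM Y Y * D.act X D.lnlam) := by
  have h : D.sff Y Y = D.act Y D.lnlam • D.Fstar Y + D.act Y D.lnlam • D.Fstar Y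
      - D.gM Y Y • D.Fstar (D.grad D.lnlam) := D.sff_horizontal Y Y hY hY
  rw [h, D.gN_sub_left, D.gN_add_left, D.gN_smul_left, D.gN_smul_left,
    D.gN_Fstar_Fstar hX, D.gN_Fstar_Fstar hX, D.grad_spec]
  ring

lemma gN_tension_Fstar {m : ℕ} {e : Fin m → VFM} (he : D.IsFrame e) {X : VFM}
    (hX : D.Vp X = 0) :
    D.gN (∑ i, D.sff (e i) (e i)) (D.Fstar X)
      = D.lam ^ 2 * ((2 - D.dimN) * D.act X D.lnlam
          - ∑ i, D.gM (D.nabla (D.Vp (e i)) (D.Vp (e i))) X) := by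
  have term : ∀ i, D.gN (D.sff (e i) (e i)) (D.Fstar X)
      = D.lam ^ 2 * (2 * (D.gM (D.grad D.lnlam) (D.Hp (e i)) * D.gM (D.Hp (e i)) X)
          - D.gM (D.Hp (e i)) (D.Hp (e i)) * D.act X D.lnlam
          - D.gM (D.nabla (D.Vp (e i)) (D.Vp (e i))) X
          - 2 * D.gM (D.nabla (D.Hp (e i)) (D.Vp (e i))) X) := fun i => by
    rw [D.sff_self, D.gN_add_left, D.gN_add_left, D.gN_add_left,
      D.gN_sff_Fstar_of_vertical (D.Hp_Vp _) hX, D.gN_sff_Fstar_of_vertical (D.Hp_Vp _) hX,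
      D.gN_sff_Fstar_of_horizontal hX (D.Vp_Hp _), D.grad_spec]
    ring
  rw [D.gN_sum_left, Finset.sum_congr rfl fun i _ => term i, ← Finset.mul_sum]
  simp only [Finset.sum_sub_distrib, ← Finset.mul_sum, ← Finset.sum_mul]
  rw [sum_gM_mul_gM_Hp he hX, sum_gM_Hp_self he, sum_gM_nabla_Hp_Vp he hX, D.grad_spec]
  ring

/-- `∑ᵢ H∇_{V eᵢ} V eᵢ` is the trace of the O'Neill tensor `T` over `ker F_*`, a multiple of
the mean curvature vector of the fibres. -/
def MinimalFibres : Prop :=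
  ∀ (m : ℕ) (e : Fin m → VFM), D.IsFrame e → ∀ X, D.Vp X = 0 →
    ∑ i, D.gM (D.nabla (D.Vp (e i)) (D.Vp (e i))) X = 0

theorem harmonic_of_minimalFibres (hdim : D.dimN = 2) (hmin : D.MinimalFibres) :
    D.Harmonic := by
  intro m e he
  refine D.eq_zero_of_forall_gN_Fstar _ fun X hX => ?_
  rw [D.gN_tension_Fstar he hX, hmin m e he X hX, hdim]
  push_cast
  ring

section Slant

variable {D} {m : ℕ} {e : Fin m → VFM} {R : VFM → VFM} {θ : ℝ}

lemma Hp_phi (E : VFM) : D.Hp (D.phi R E) = 0 := D.Hp_Vp _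

lemma Vp_phi (E : VFM) : D.Vp (D.phi R E) = D.phi R E := D.Vp_Vp _

lemma Vp_om (E : VFM) : D.Vp (D.om R E) = 0 := D.Vp_Hp _

lemma phi_add (hherm : D.IsHermitian R) (E E' : VFM) :
    D.phi R (E + E') = D.phi R E + D.phi R E' := by
  rw [phi, phi, phi, hherm.1, D.Vp_add]

lemma phi_smul (hherm : D.IsHermitian R) (f : M → ℝ) (E : VFM) :
    D.phi R (f • E) = f • D.phi R E := by
  rw [phi, phi, hherm.2.1, D.Vp_smul]

lemma phi_neg (hherm : D.IsHermitian R) (E : VFM) : D.phi R (-E) = -D.phi R E :=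
  map_neg (AddMonoidHom.mk' (D.phi R) (phi_add hherm)) E

lemma om_add (hherm : D.IsHermitian R) (E E' : VFM) :
    D.om R (E + E') = D.om R E + D.om R E' := by
  rw [om, om, om, hherm.1, D.Hp_add]

lemma gM_apply_left (hherm : D.IsHermitian R) (A B : VFM) : D.gM (R A) B = -D.gM A (R B) := by
  have h := hherm.2.2.2 A (R B)
  rw [hherm.2.2.1, D.gM_neg_right] at h
  rw [← h, neg_neg]

lemma gM_phi_Vp_left (hherm : D.IsHermitian R) (A B : VFM) :
    D.gM (D.phi R (D.Vp A)) B = -D.gM A (D.phi R (D.Vp B)) := by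
  rw [phi, phi, D.gM_Vp_comm (R _), gM_apply_left hherm, D.gM_Vp_comm A]

lemma gM_om_left (hherm : D.IsHermitian R) {Y Z : VFM} (hY : D.Vp Y = 0) (hZ : D.Vp Z = 0) :
    D.gM (D.om R Y) Z = -D.gM Y (D.om R Z) := by
  rw [om, om, D.gM_Hp_of_horizontal hZ, gM_apply_left hherm, D.gM_symm Y (D.Hp (R Z)),
    D.gM_Hp_of_horizontal hY, D.gM_symm]

lemma gM_om_phi (hherm : D.IsHermitian R) {Z : VFM} (hZ : D.Vp Z = 0) (Y : VFM) :
    D.gM (D.om R (D.phi R Y)) Z = -D.gM (D.phi R Y) (D.phi R Z) := by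
  rw [om, D.gM_Hp_of_horizontal hZ, gM_apply_left hherm, phi, phi, ← D.gM_Vp_comm, D.Vp_Vp]

lemma gM_phi_self (he : D.IsFrame e) (hslant : D.IsSlantOp R θ) {V : VFM} (hV : D.Hp V = 0) :
    D.gM (D.phi R V) (D.phi R V) = (fun _ : M => Real.cos θ ^ 2) * D.gM V V := by
  funext p
  rw [← Real.sq_sqrt (gM_self_nonneg he _ p), hslant.2.2 V hV p, mul_pow,
    Real.sq_sqrt (gM_self_nonneg he V p)]
  rfl

lemma gM_phi_phi (he : D.IsFrame e) (hherm : D.IsHermitian R) (hslant : D.IsSlantOp R θ)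
    {V W : VFM} (hV : D.Hp V = 0) (hW : D.Hp W = 0) :
    D.gM (D.phi R V) (D.phi R W) = (fun _ : M => Real.cos θ ^ 2) * D.gM V W := by
  have hVW : D.Hp (V + W) = 0 := by rw [D.Hp_add, hV, hW, add_zero]
  have h := gM_phi_self he hslant hVW
  rw [phi_add hherm, D.gM_add_left, D.gM_add_right, D.gM_add_right, D.gM_add_left, D.gM_add_right,
    D.gM_add_right, gM_phi_self he hslant hV, gM_phi_self he hslant hW,
    D.gM_symm (D.phi R W), D.gM_symm W V] at h
  funext p
  have hp := congrFun h p
  simp only [Pi.add_apply, Pi.mul_apply] at hp ⊢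
  linarith

lemma phi_phi (he : D.IsFrame e) (hherm : D.IsHermitian R) (hslant : D.IsSlantOp R θ)
    {V : VFM} (hV : D.Hp V = 0) :
    D.phi R (D.phi R V) = -((fun _ : M => Real.cos θ ^ 2) • V) := by
  refine eq_neg_of_add_eq_zero_left (eq_zero_of_forall_gM he _ fun B => ?_)
  rw [D.gM_add_left, D.gM_smul_left, ← Vp_phi V, gM_phi_Vp_left hherm,
    gM_phi_phi he hherm hslant hV (D.Hp_Vp B), D.gM_symm V, D.gM_Vp_of_vertical hV, D.gM_symm]
  ring

lemma Hp_nabla_phi (hherm : D.IsHermitian R) (hparallel : D.IsParallel R) (hpar : D.OmParallel R)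
    {V W : VFM} (hV : D.Hp V = 0) (hW : D.Hp W = 0) :
    D.Hp (D.nabla V (D.phi R W)) = D.om R (D.Hp (D.nabla V W)) := by
  have h : D.Hp (D.nabla V (D.phi R W)) + D.Hp (D.nabla V (D.om R W))
      = D.om R (D.Vp (D.nabla V W)) + D.om R (D.Hp (D.nabla V W)) := by
    rw [← D.Hp_add, ← D.nabla_add_right, phi, om, D.Vp_add_Hp, hparallel, ← om_add hherm,
      D.Vp_add_Hp]
    rfl
  rw [hpar V W hV hW, add_comm (D.om R _)] at h
  exact add_right_cancel h

lemma om_om (hherm : D.IsHermitian R) {Y : VFM} (hY : D.Vp Y = 0) :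
    D.om R (D.om R Y) = -Y - D.om R (D.phi R Y) := by
  have h : D.om R (D.phi R Y) + D.om R (D.om R Y) = -Y := by
    rw [← om_add hherm]
    show D.Hp (R (D.Vp (R Y) + D.Hp (R Y))) = -Y
    rw [D.Vp_add_Hp, hherm.2.2.1, D.Hp_neg, D.Hp_eq_self hY]
  exact eq_sub_of_add_eq' h

lemma om_phi_Hp_nabla (he : D.IsFrame e) (hherm : D.IsHermitian R) (hparallel : D.IsParallel R)
    (hpar : D.OmParallel R) (hslant : D.IsSlantOp R θ) {V W : VFM} (hV : D.Hp V = 0)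
    (hW : D.Hp W = 0) :
    D.om R (D.phi R (D.Hp (D.nabla W V)))
      = (fun _ : M => Real.cos θ ^ 2) • D.Hp (D.nabla W V) - D.Hp (D.nabla W V) := by
  have twice : D.Hp (D.nabla W (D.phi R (D.phi R V)))
      = -D.Hp (D.nabla W V) - D.om R (D.phi R (D.Hp (D.nabla W V))) := by
    rw [Hp_nabla_phi hherm hparallel hpar hW (Hp_phi V), Hp_nabla_phi hherm hparallel hpar hW hV,
      om_om hherm (D.Vp_Hp _)]
  have slant : D.Hp (D.nabla W (D.phi R (D.phi R V)))
      = -((fun _ : M => Real.cos θ ^ 2) • D.Hp (D.nabla W V)) := by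
    rw [phi_phi he hherm hslant hV, D.nabla_neg_right, D.Hp_neg, D.nabla_leibniz, D.Hp_add,
      D.Hp_smul, D.Hp_smul, hV, smul_zero, zero_add]
  linear_combination (norm := module) twice - slant

lemma gM_nabla_phi_phi (he : D.IsFrame e) (hherm : D.IsHermitian R) (hparallel : D.IsParallel R)
    (hpar : D.OmParallel R) (hslant : D.IsSlantOp R θ) {V W X : VFM} (hV : D.Hp V = 0)
    (hW : D.Hp W = 0) (hX : D.Vp X = 0) :
    D.gM (D.nabla (D.phi R V) (D.phi R W)) X
      = -((fun _ : M => Real.cos θ ^ 2) * D.gM (D.nabla V W) X) := by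
  set Y := D.Hp (D.nabla W V)
  have hY : D.Vp Y = 0 := D.Vp_Hp _
  calc D.gM (D.nabla (D.phi R V) (D.phi R W)) X
      = D.gM (D.om R (D.Hp (D.nabla (D.phi R V) W))) X := by
        rw [← Hp_nabla_phi hherm hparallel hpar (Hp_phi V) hW, D.gM_Hp_of_horizontal hX]
    _ = -D.gM (D.nabla W (D.phi R V)) (D.om R X) := by
        rw [gM_om_left hherm (D.Vp_Hp _) hX, D.gM_Hp_of_horizontal (Vp_om X),
          D.gM_nabla_comm_of_vertical (Hp_phi V) hW (Vp_om X)]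
    _ = D.gM Y (D.om R (D.om R X)) := by
        rw [← D.gM_Hp_of_horizontal (Vp_om X), Hp_nabla_phi hherm hparallel hpar hW hV,
          gM_om_left hherm hY (Vp_om X), neg_neg]
    _ = -D.gM Y X - D.gM (D.om R (D.phi R Y)) X := by
        rw [om_om hherm hX, D.gM_sub_right, D.gM_neg_right, D.gM_symm Y (D.om R _),
          gM_om_phi hherm hY, gM_om_phi hherm hX, D.gM_symm (D.phi R X)]
    _ = -((fun _ : M => Real.cos θ ^ 2) * D.gM (D.nabla V W) X) := by
        rw [om_phi_Hp_nabla he hherm hparallel hpar hslant hV hW, D.gM_sub_left, D.gM_smul_left,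
          D.gM_Hp_of_horizontal hX, D.gM_nabla_comm_of_vertical hW hV hX]
        ring

/-- `φ_R` is skew with `φ_R² = -cos² θ` on vertical fields, so moving it across the trace of
`(V, W) ↦ g(∇_{φ_R V} W, X)` turns `gM_nabla_phi_phi`'s factor `-cos² θ` into `cos² θ`. -/
theorem minimalFibres_of_omParallel (hherm : D.IsHermitian R) (hparallel : D.IsParallel R)
    (hslant : D.IsSlantOp R θ) (hpar : D.OmParallel R) (hcos : Real.cos θ ≠ 0) :
    D.MinimalFibres := by
  intro m e he X hX
  have transfer := sum_apply_eq_sum_adjoint_apply he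
    (fun A B => D.gM (D.nabla (D.phi R (D.Vp A)) (D.Vp B)) X)
    (fun A A' B => by simp only [D.Vp_add, phi_add hherm, D.nabla_add_left, D.gM_add_left])
    (fun f A B => by simp only [D.Vp_smul, phi_smul hherm, D.nabla_smul_left, D.gM_smul_left])
    (fun A B B' => by simp only [D.Vp_add, D.nabla_add_right, D.gM_add_left])
    (fun f A B => by
      simp only [D.Vp_smul, D.nabla_leibniz, D.gM_add_left, D.gM_smul_left,
        D.gM_Vp_of_horizontal hX, mul_zero, zero_add])
    (fun E => D.phi R (D.Vp E)) (fun E => -D.phi R (D.Vp E))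
    (fun A B => by rw [D.gM_neg_right]; exact gM_phi_Vp_left hherm A B)
  have lhs : ∀ i, D.gM (D.nabla (D.phi R (D.Vp (e i))) (D.Vp (D.phi R (D.Vp (e i))))) X
      = -((fun _ : M => Real.cos θ ^ 2) * D.gM (D.nabla (D.Vp (e i)) (D.Vp (e i))) X) := by
    intro i
    rw [Vp_phi]
    exact gM_nabla_phi_phi he hherm hparallel hpar hslant (D.Hp_Vp _) (D.Hp_Vp _) hX
  have rhs : ∀ j, D.gM (D.nabla (D.phi R (D.Vp (-D.phi R (D.Vp (e j))))) (D.Vp (e j))) X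
      = (fun _ : M => Real.cos θ ^ 2) * D.gM (D.nabla (D.Vp (e j)) (D.Vp (e j))) X := by
    intro j
    rw [D.Vp_neg, Vp_phi, phi_neg hherm, phi_phi he hherm hslant (D.Hp_Vp _), neg_neg,
      D.nabla_smul_left, D.gM_smul_left]
  simp only [lhs, rhs, Finset.sum_neg_distrib, ← Finset.mul_sum] at transfer
  funext p
  have hp := congrFun transfer p
  simp only [Pi.neg_apply, Pi.mul_apply] at hp
  have hsq : Real.cos θ ^ 2 * (∑ i, D.gM (D.nabla (D.Vp (e i)) (D.Vp (e i))) X) p = 0 := by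
    linarith
  exact (mul_eq_zero.1 hsq).resolve_left (pow_ne_zero 2 hcos)

end Slant

end HorizConfSubmersion

/-- if `dim N = 2` and `ω_R` is parallel with slant angle
`0 ≤ θ_R < π/2` for some `R ∈ {I, J, K}`, then `F` is harmonic. -/
theorem harmonic_of_dimN_two
    {M VFM VFN : Type} [AddCommGroup VFM] [Module (M → ℝ) VFM]
    [AddCommGroup VFN] [Module (M → ℝ) VFN]
    (D : HorizConfSubmersion M VFM VFN) (Q : HyperkahlerTriple D)
    (θI θJ θK : ℝ)
    (hslantI : D.IsSlantOp Q.I θI) (hslantJ : D.IsSlantOp Q.J θJ)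
    (hslantK : D.IsSlantOp Q.K θK)
    (hdim : D.dimN = 2)
    (R : VFM → VFM) (θR : ℝ)
    (hR : (R = Q.I ∧ θR = θI) ∨ (R = Q.J ∧ θR = θJ) ∨ (R = Q.K ∧ θR = θK))
    (hpar : D.OmParallel R) (hθ : θR < Real.pi / 2) :
    D.Harmonic := by
  obtain ⟨hherm, hparallel, hslant⟩ :
      D.IsHermitian R ∧ D.IsParallel R ∧ D.IsSlantOp R θR := by
    rcases hR with ⟨rfl, rfl⟩ | ⟨rfl, rfl⟩ | ⟨rfl, rfl⟩
    exacts [⟨Q.hermitian_I, Q.parallel_I, hslantI⟩, ⟨Q.hermitian_J, Q.parallel_J, hslantJ⟩,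
      ⟨Q.hermitian_K, Q.parallel_K, hslantK⟩]
  have hcos : Real.cos θR ≠ 0 :=
    (Real.cos_pos_of_mem_Ioo ⟨by linarith [hslant.1, Real.pi_pos], hθ⟩).ne'
  exact D.harmonic_of_minimalFibres hdim
    (HorizConfSubmersion.minimalFibres_of_omParallel hherm hparallel hslant hpar hcos)
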